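/- Let {S_ι : ι ∈ I} be an infinite collection of semigroups each with identity 1, with nets F_ι in P_f(S_ι), and let F be the product net determined by them. Then d*_F of the complement of ∏_{ι∈I}(S_ι \ {1}) inside ∏_{ι∈I} S_ι equals 1. -/

import Mathlib

open scoped Classical symmDiff

/-- The translate `F · s` of a finite piece `F` by an element of `S ∪ {1}`
(`none` meaning "no shift"). -/
def netShift {S : Type*} [Mul S] (F : Set S) : Option S → Set S
  | none => F
  | some t => (· * t) '' F

/-- Upper Banach density of `A ⊆ S` with respect to a net `F = ⟨F i⟩` of finite
nonempty subsets of `S`, indexed by a directed preorder `I`. -/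
noncomputable def uBD {S : Type*} [Mul S] {I : Type*} [Preorder I]
    (F : I → Set S) (A : Set S) : ℝ :=
  sSup {α : ℝ | ∀ i₀ : I, ∃ i, i₀ ≤ i ∧ ∃ s : Option S,
    α * ((F i).ncard : ℝ) ≤ ((A ∩ netShift (F i) s).ncard : ℝ)}

/-- Extension of the net `F` on index set `J` to `J' = J ∪ {1}`, where the
distinguished index `⊥` carries the singleton `{1}`. -/
noncomputable def extNet {S : Type*} [One S] {J : Type*} (F : J → Set S) :
    WithBot J → Set S :=
  WithBot.recBotCoe ({1} : Set S) F

/-- The index set `𝔍` of the product net: vectors of extended indices that differ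
from the distinguished index `⊥` in only finitely many coordinates, ordered
coordinatewise. -/
abbrev ProdIdx {ι : Type*} (J : ι → Type*) : Type _ :=
  {j : ∀ i, WithBot (J i) // {i | j i ≠ ⊥}.Finite}

/-- The product net determined by the family of nets `F i`. -/
noncomputable def prodNet {ι : Type*} {S : ι → Type*} [∀ i, One (S i)]
    {J : ι → Type*} (F : ∀ i, J i → Set (S i)) :
    ProdIdx J → Set (∀ i, S i) :=
  fun j => Set.pi Set.univ fun i => extNet (F i) (j.1 i)

/-!
Only finitely many coordinates of an index of the product net differ from the distinguished
index, and there are infinitely many coordinates, so every piece of the net has a coordinate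
pinned to `{1}`. Hence every piece lies inside the set in question, which then has density `1`:
the unshifted piece witnesses `1`, and no set has density above `1` along a net of finite
nonempty pieces.
-/

theorem Set.Finite.univ_pi_of_subsingleton_outside {ι : Type*} {α : ι → Type*}
    {t : ∀ i, Set (α i)} {T : Set ι} (hT : T.Finite) (ht : ∀ i, (t i).Finite)
    (hsub : ∀ i ∉ T, (t i).Subsingleton) : (Set.pi Set.univ t).Finite := by
  have := hT.to_subtype
  refine Set.Finite.of_finite_image (f := fun x (i : T) => x i)
    ((Set.Finite.pi fun i : T => ht i).subset ?_) ?_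
  · rintro _ ⟨x, hx, rfl⟩ i -
    exact hx i trivial
  · intro x hx y hy hxy
    funext i
    by_cases hi : i ∈ T
    · exact congrFun hxy ⟨i, hi⟩
    · exact hsub i hi (hx i trivial) (hy i trivial)

section Density

variable {S : Type*} [Mul S]

theorem netShift_finite {F : Set S} (hF : F.Finite) : ∀ s, (netShift F s).Finite
  | none => hF
  | some _ => hF.image _

theorem ncard_netShift_le {F : Set S} (hF : F.Finite) : ∀ s, (netShift F s).ncard ≤ F.ncard
  | none => le_rfl
  | some _ => Set.ncard_image_le hF

theorem ncard_inter_netShift_le {F : Set S} (hF : F.Finite) (A : Set S) (s : Option S) :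
    (A ∩ netShift F s).ncard ≤ F.ncard :=
  (Set.ncard_inter_le_ncard_right A _ (netShift_finite hF s)).trans (ncard_netShift_le hF s)

theorem le_one_of_mul_ncard_le {F A : Set S} {s : Option S} {α : ℝ} (hF : F.Finite)
    (hne : F.Nonempty) (h : α * (F.ncard : ℝ) ≤ ((A ∩ netShift F s).ncard : ℝ)) : α ≤ 1 := by
  have hpos : (0 : ℝ) < F.ncard := by exact_mod_cast (Set.ncard_pos hF).2 hne
  have hle : ((A ∩ netShift F s).ncard : ℝ) ≤ F.ncard := by
    exact_mod_cast ncard_inter_netShift_le hF A s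
  nlinarith

theorem uBD_eq_one_of_forall_subset {I : Type*} [Preorder I] [Nonempty I] {F : I → Set S}
    {A : Set S} (hfin : ∀ i, (F i).Finite) (hne : ∀ i, (F i).Nonempty) (hA : ∀ i, F i ⊆ A) :
    uBD F A = 1 := by
  refine IsGreatest.csSup_eq ⟨fun i => ⟨i, le_rfl, none, ?_⟩, fun α hα => ?_⟩
  · rw [one_mul, netShift, Set.inter_eq_self_of_subset_right (hA i)]
  · obtain ⟨i, -, s, hs⟩ := hα (Classical.arbitrary I)
    exact le_one_of_mul_ncard_le (hfin i) (hne i) hs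

end Density

section ProductNet

variable {ι : Type*} {S : ι → Type*} [∀ i, One (S i)] {J : ι → Type*}

theorem ProdIdx.exists_eq_bot [Infinite ι] (j : ProdIdx J) : ∃ i, j.1 i = ⊥ := by
  obtain ⟨i, hi⟩ := j.2.infinite_compl.nonempty
  exact ⟨i, not_not.1 hi⟩

instance : Nonempty (ProdIdx J) :=
  ⟨⟨fun _ => ⊥, by simp⟩⟩

variable {F : ∀ i, J i → Set (S i)}

theorem extNet_finite (hfin : ∀ i j, (F i j).Finite) (i : ι) :
    ∀ b, (extNet (F i) b).Finite
  | ⊥ => Set.finite_singleton 1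
  | (j : J i) => hfin i j

theorem extNet_nonempty (hne : ∀ i j, (F i j).Nonempty) (i : ι) :
    ∀ b, (extNet (F i) b).Nonempty
  | ⊥ => Set.singleton_nonempty 1
  | (j : J i) => hne i j

theorem prodNet_finite (hfin : ∀ i j, (F i j).Finite) (j : ProdIdx J) :
    (prodNet F j).Finite := by
  refine Set.Finite.univ_pi_of_subsingleton_outside j.2 (fun i => extNet_finite hfin i _) ?_
  intro i hi
  rw [not_not.1 hi]
  exact Set.subsingleton_singleton

theorem prodNet_nonempty (hne : ∀ i j, (F i j).Nonempty) (j : ProdIdx J) :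
    (prodNet F j).Nonempty :=
  Set.univ_pi_nonempty_iff.2 fun i => extNet_nonempty hne i _

theorem prodNet_subset_compl_pi_ne_one [Infinite ι] (j : ProdIdx J) :
    prodNet F j ⊆ (Set.pi Set.univ fun i => {x : S i | x ≠ 1})ᶜ := by
  obtain ⟨i, hi⟩ := j.exists_eq_bot
  intro x hx hne
  have hxi : x i ∈ extNet (F i) (j.1 i) := hx i trivial
  rw [hi] at hxi
  exact hne i trivial hxi

end ProductNet

theorem prodNet_density_complement_eq_one_general {ι : Type*} [Infinite ι]
    {S : ι → Type*} [∀ i, Monoid (S i)]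
    {J : ι → Type*} [∀ i, Preorder (J i)]
    (F : ∀ i, J i → Set (S i))
    (hfin : ∀ i j, (F i j).Finite) (hne : ∀ i j, (F i j).Nonempty) :
    uBD (prodNet F) ((Set.pi Set.univ fun i => {x : S i | x ≠ 1})ᶜ) = 1 :=
  uBD_eq_one_of_forall_subset (prodNet_finite hfin) (prodNet_nonempty hne)
    prodNet_subset_compl_pi_ne_one

theorem prodNet_density_complement_eq_one {ι : Type*} [Infinite ι]
    {S : ι → Type*} [∀ i, Monoid (S i)]
    {J : ι → Type*} [∀ i, Preorder (J i)] [∀ i, Nonempty (J i)]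
    (F : ∀ i, J i → Set (S i))
    (hfin : ∀ i j, (F i j).Finite) (hne : ∀ i j, (F i j).Nonempty)
    (hdir : ∀ i, ∀ j k : J i, ∃ l, j ≤ l ∧ k ≤ l) :
    uBD (prodNet F) ((Set.pi Set.univ fun i => {x : S i | x ≠ 1})ᶜ) = 1 :=
  prodNet_density_complement_eq_one_general F hfin hne
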